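/- arXiv:1412.3008 — 4 statements merged into one kernel-verified Lean document; each statement's English description precedes it below -/
import Mathlib

section
/- For a Boolean algebra B, the set T(B) of weakly increasing n-tuples (x_1 ≤ … ≤ x_n) with componentwise lattice operations, involution (x_1,…,x_n)* = (¬x_n,…,¬x_1), and φ_i(x_1,…,x_n) = (x_i,…,x_i), is an LM_{n+1}-algebra. -/
/-- Increasing `n`-tuples over a Boolean algebra `B`. -/
abbrev TB (n : ℕ) (B : Type*) [BooleanAlgebra B] := {x : Fin n → B // Monotone x}

variable {n : ℕ} {B : Type*} [BooleanAlgebra B]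

def Tsup (x y : TB n B) : TB n B :=
  ⟨fun i => x.1 i ⊔ y.1 i, fun _ _ h => sup_le_sup (x.2 h) (y.2 h)⟩

def Tinf (x y : TB n B) : TB n B :=
  ⟨fun i => x.1 i ⊓ y.1 i, fun _ _ h => inf_le_inf (x.2 h) (y.2 h)⟩

/-- The involution `(x_1,…,x_n)* = (¬x_n,…,¬x_1)`. -/
def Tstar (x : TB n B) : TB n B :=
  ⟨fun i => (x.1 i.rev)ᶜ, fun _ _ h => compl_le_compl (x.2 (Fin.rev_le_rev.mpr h))⟩

/-- `φ_i(x_1,…,x_n) = (x_i,…,x_i)`. -/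
def Tphi (i : Fin n) (x : TB n B) : TB n B := ⟨fun _ => x.1 i, monotone_const⟩

def Ttop : TB n B := ⟨fun _ => ⊤, monotone_const⟩
def Tbot : TB n B := ⟨fun _ => ⊥, monotone_const⟩

/-! Every operation on `T(B)` acts coordinatewise in `B`, except that `*` also reverses the
coordinates; this reversal is what turns `φ_i` into `φ_{n+1-i}` in (L4). -/

@[simp] lemma Tsup_apply (x y : TB n B) (i : Fin n) : (Tsup x y).1 i = x.1 i ⊔ y.1 i := rfl

@[simp] lemma Tinf_apply (x y : TB n B) (i : Fin n) : (Tinf x y).1 i = x.1 i ⊓ y.1 i := rfl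

@[simp] lemma Tstar_apply (x : TB n B) (i : Fin n) : (Tstar x).1 i = (x.1 i.rev)ᶜ := rfl

lemma TB.ext {x y : TB n B} (h : ∀ i, x.1 i = y.1 i) : x = y :=
  Subtype.ext (funext h)

lemma TB.le_iff {x y : TB n B} : x ≤ y ↔ ∀ i, x.1 i ≤ y.1 i := Iff.rfl

lemma Tsup_le_iff {x y z : TB n B} : Tsup x y ≤ z ↔ x ≤ z ∧ y ≤ z := by
  simp only [TB.le_iff, Tsup_apply, sup_le_iff, forall_and]

lemma le_Tinf_iff {x y z : TB n B} : z ≤ Tinf x y ↔ z ≤ x ∧ z ≤ y := by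
  simp only [TB.le_iff, Tinf_apply, le_inf_iff, forall_and]

lemma le_Ttop (x : TB n B) : x ≤ Ttop := TB.le_iff.2 fun _ => le_top

lemma Tbot_le (x : TB n B) : Tbot ≤ x := TB.le_iff.2 fun _ => bot_le

lemma Tinf_Tsup_left (x y z : TB n B) : Tinf x (Tsup y z) = Tsup (Tinf x y) (Tinf x z) :=
  TB.ext fun _ => inf_sup_left _ _ _

lemma Tstar_Tstar (x : TB n B) : Tstar (Tstar x) = x :=
  TB.ext fun i => by rw [Tstar_apply, Tstar_apply, Fin.rev_rev, compl_compl]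

lemma Tstar_Tsup (x y : TB n B) : Tstar (Tsup x y) = Tinf (Tstar x) (Tstar y) :=
  TB.ext fun _ => compl_sup

lemma Tphi_Tsup (i : Fin n) (x y : TB n B) : Tphi i (Tsup x y) = Tsup (Tphi i x) (Tphi i y) :=
  rfl

lemma Tsup_Tphi_Tstar_Tphi_eq_Ttop (i : Fin n) (x : TB n B) :
    Tsup (Tphi i x) (Tstar (Tphi i x)) = Ttop :=
  TB.ext fun _ => sup_compl_eq_top

lemma Tphi_Tphi (i j : Fin n) (x : TB n B) : Tphi i (Tphi j x) = Tphi j x := rfl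

lemma Tphi_Tstar (i : Fin n) (x : TB n B) : Tphi i (Tstar x) = Tstar (Tphi i.rev x) := rfl

lemma Tphi_mono_index (x : TB n B) : Monotone fun i : Fin n => Tphi i x :=
  fun _ _ hij => TB.le_iff.2 fun _ => x.2 hij

lemma TB.ext_of_Tphi {x y : TB n B} (h : ∀ i, Tphi i x = Tphi i y) : x = y :=
  TB.ext fun i => congrFun (congrArg Subtype.val (h i)) i

/-- For a Boolean algebra `B`, the set `T(B)` of increasing `n`-tuples, with componentwise
lattice operations, involution `(x_1,…,x_n)* = (¬x_n,…,¬x_1)` and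
`φ_i(x_1,…,x_n) = (x_i,…,x_i)`, is an `LM_{n+1}`-algebra: it is a bounded distributive
lattice (here: `Tsup`/`Tinf` are sup/inf for the componentwise order, with top `Ttop` and
bottom `Tbot`), `Tstar` is a De Morgan involution, and the `φ`'s satisfy (L1)–(L6). -/
theorem TB_is_LM (n : ℕ) (B : Type*) [BooleanAlgebra B] :
    (∀ x y z : TB n B, Tsup x y ≤ z ↔ x ≤ z ∧ y ≤ z) ∧
    (∀ x y z : TB n B, z ≤ Tinf x y ↔ z ≤ x ∧ z ≤ y) ∧
    (∀ x : TB n B, x ≤ Ttop ∧ Tbot ≤ x) ∧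
    (∀ x y z : TB n B, Tinf x (Tsup y z) = Tsup (Tinf x y) (Tinf x z)) ∧
    (∀ x : TB n B, Tstar (Tstar x) = x) ∧
    (∀ x y : TB n B, Tstar (Tsup x y) = Tinf (Tstar x) (Tstar y)) ∧
    -- (L1)
    (∀ (i : Fin n) (x y : TB n B), Tphi i (Tsup x y) = Tsup (Tphi i x) (Tphi i y)) ∧
    -- (L2)
    (∀ (i : Fin n) (x : TB n B), Tsup (Tphi i x) (Tstar (Tphi i x)) = Ttop) ∧
    -- (L3)
    (∀ (i j : Fin n) (x : TB n B), Tphi i (Tphi j x) = Tphi j x) ∧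
    -- (L4)
    (∀ (i : Fin n) (x : TB n B), Tphi i (Tstar x) = Tstar (Tphi i.rev x)) ∧
    -- (L5)
    (∀ (i j : Fin n) (x : TB n B), i ≤ j → Tphi i x ≤ Tphi j x) ∧
    -- (L6)
    (∀ x y : TB n B, (∀ i : Fin n, Tphi i x = Tphi i y) → x = y) :=
  ⟨fun _ _ _ => Tsup_le_iff, fun _ _ _ => le_Tinf_iff, fun x => ⟨le_Ttop x, Tbot_le x⟩,
    Tinf_Tsup_left, Tstar_Tstar, Tstar_Tsup, Tphi_Tsup, Tsup_Tphi_Tstar_Tphi_eq_Ttop, Tphi_Tphi,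
    Tphi_Tstar, fun _ _ x hij => Tphi_mono_index x hij, fun _ _ => TB.ext_of_Tphi⟩
end

section
/- For any LM_{n+1}-algebra L, the map η_L : L → T(C(L)) given by η_L(x) = (φ_1(x),…,φ_n(x)) is an injective LM_{n+1}-algebra homomorphism. -/
/-!
Apart from `⊓`, `⊥` and `⊤`, every clause is an axiom of `LM_{n+1}`-algebras (injectivity is
Moisil's determination principle). Meets are transported through `φ_i(x*) = (φ_{rev i} x)*` and
De Morgan duality, and `φ_i 1 = 1` because `1 = φ_i 1 ⊔ (φ_i 1)*` is a join of two elements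
fixed by `φ_i`.
-/

open Function

section DeMorgan

variable {L : Type*} [Lattice L] {s : L → L}

theorem antitone_of_map_sup_eq_inf (h_dm : ∀ x y : L, s (x ⊔ y) = s x ⊓ s y) : Antitone s :=
  fun a b hab => by
    have h := h_dm a b
    rw [sup_eq_right.mpr hab] at h
    exact h ▸ inf_le_left

theorem map_inf_eq_sup_of_involutive (hs : Involutive s)
    (h_dm : ∀ x y : L, s (x ⊔ y) = s x ⊓ s y) (x y : L) : s (x ⊓ y) = s x ⊔ s y := by
  rw [← hs (s x ⊔ s y), h_dm, hs, hs]

theorem map_top_eq_bot_of_involutive [BoundedOrder L] (hs : Involutive s)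
    (h_dm : ∀ x y : L, s (x ⊔ y) = s x ⊓ s y) : s ⊤ = ⊥ :=
  le_bot_iff.mp (hs ⊥ ▸ antitone_of_map_sup_eq_inf h_dm le_top)

end DeMorgan

section Chrysippian

variable {ι L : Type*} [Lattice L] {s : L → L} {φ : ι → L → L} {r : ι → ι}

theorem map_top_of_sup_compl_eq_top [OrderTop L]
    (h_sup : ∀ i (x y : L), φ i (x ⊔ y) = φ i x ⊔ φ i y)
    (h_compl : ∀ i (x : L), φ i x ⊔ s (φ i x) = ⊤)
    (h_idem : ∀ i j (x : L), φ i (φ j x) = φ j x)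
    (h_s : ∀ i (x : L), φ i (s x) = s (φ (r i) x)) (i : ι) : φ i ⊤ = ⊤ :=
  calc φ i ⊤ = φ i (φ i ⊤ ⊔ s (φ i ⊤)) := by rw [h_compl]
    _ = φ i ⊤ ⊔ s (φ i ⊤) := by rw [h_sup, h_idem, h_s, h_idem]
    _ = ⊤ := h_compl i ⊤

theorem map_bot_of_map_top [BoundedOrder L] (hs : Involutive s)
    (h_dm : ∀ x y : L, s (x ⊔ y) = s x ⊓ s y)
    (h_s : ∀ i (x : L), φ i (s x) = s (φ (r i) x)) (h_top : ∀ i, φ i ⊤ = ⊤) (i : ι) :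
    φ i ⊥ = ⊥ := by
  rw [← map_top_eq_bot_of_involutive hs h_dm, h_s, h_top]

theorem map_inf_of_map_sup (hs : Involutive s) (hr : Involutive r)
    (h_dm : ∀ x y : L, s (x ⊔ y) = s x ⊓ s y)
    (h_sup : ∀ i (x y : L), φ i (x ⊔ y) = φ i x ⊔ φ i y)
    (h_s : ∀ i (x : L), φ i (s x) = s (φ (r i) x)) (i : ι) (x y : L) :
    φ i (x ⊓ y) = φ i x ⊓ φ i y :=
  calc φ i (x ⊓ y) = φ i (s (s x ⊔ s y)) := by rw [h_dm, hs, hs]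
    _ = s (φ (r i) (s x)) ⊓ s (φ (r i) (s y)) := by rw [h_s, h_sup, h_dm]
    _ = φ i x ⊓ φ i y := by rw [h_s, h_s, hr, hs, hs]

end Chrysippian

/-- In any `LM_{n+1}`-algebra `L` (a De Morgan algebra with Chrysippian endomorphisms
`φ_1, …, φ_n`, here indexed by `Fin n`, so that the paper's `φ_{n+1-i}` is `φ (Fin.rev i)`),
the map `η : L → T(C(L))`, `η(x) = (φ_1(x),…,φ_n(x))`, is an injective `LM_{n+1}`-algebra homomorphism. -/
theorem lm_eta_injective_hom (n : ℕ) (L : Type*) [DistribLattice L] [BoundedOrder L]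
    (s : L → L)
    (h_inv : ∀ x : L, s (s x) = x)
    (h_dm : ∀ x y : L, s (x ⊔ y) = s x ⊓ s y)
    (φ : Fin n → L → L)
    (hL1 : ∀ (i : Fin n) (x y : L), φ i (x ⊔ y) = φ i x ⊔ φ i y)
    (hL2 : ∀ (i : Fin n) (x : L), φ i x ⊔ s (φ i x) = ⊤)
    (hL3 : ∀ (i j : Fin n) (x : L), φ i (φ j x) = φ j x)
    (hL4 : ∀ (i : Fin n) (x : L), φ i (s x) = s (φ i.rev x))
    (hL5 : ∀ (i j : Fin n) (x : L), i ≤ j → φ i x ≤ φ j x)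
    (hL6 : ∀ x y : L, (∀ i : Fin n, φ i x = φ i y) → x = y) :
    -- η is injective
    Function.Injective (fun (x : L) (i : Fin n) => φ i x) ∧
    -- η lands in T(C(L)): the tuple is increasing and each component is in the Boolean center
    (∀ x : L, Monotone fun i : Fin n => φ i x) ∧
    (∀ (x : L) (i : Fin n), φ i x ⊔ s (φ i x) = ⊤) ∧
    -- η preserves ⊔ and ⊓ (componentwise)
    (∀ (x y : L) (i : Fin n), φ i (x ⊔ y) = φ i x ⊔ φ i y) ∧
    (∀ (x y : L) (i : Fin n), φ i (x ⊓ y) = φ i x ⊓ φ i y) ∧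
    -- η preserves the involution: η(x*)_i = (η(x)_{rev i})* (complement in C(L) is s)
    (∀ (x : L) (i : Fin n), φ i (s x) = s (φ i.rev x)) ∧
    -- η preserves 0 and 1
    (∀ i : Fin n, φ i (⊥ : L) = ⊥) ∧
    (∀ i : Fin n, φ i (⊤ : L) = ⊤) ∧
    -- η preserves each φ_i: η(φ_i x) = φ_i^{T(C(L))}(η x), i.e. (η(φ_i x))_j = (η x)_i
    (∀ (x : L) (i j : Fin n), φ j (φ i x) = φ i x) := by
  have h_top := map_top_of_sup_compl_eq_top hL1 hL2 hL3 hL4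
  refine ⟨fun x y hxy => hL6 x y (congrFun hxy), fun x i j hij => hL5 i j x hij,
    fun x i => hL2 i x, fun x y i => hL1 i x y,
    fun x y i => map_inf_of_map_sup h_inv Fin.rev_rev h_dm hL1 hL4 i x y, fun x i => hL4 i x,
    map_bot_of_map_top h_inv h_dm hL4 h_top, h_top, fun x i j => hL3 j i x⟩
end

section
/- For any Boolean algebra B, the map ε_B : C(T(B)) → B sending a constant tuple (u,u,…,u) in the Boolean center of T(B) to u is a Boolean algebra isomorphism; in particular the Boolean center of T(B) consists exactly of the constant tuples. -/
variable {n : ℕ} {B : Type*} [BooleanAlgebra B]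

/-! Componentwise, `a ⊔ bᶜ = ⊤` means `b ≤ a`, so `u` is central iff `u (rev i) ≤ u i`
for all `i`; this condition is stable under `⊔`, `⊓` and `*`. For a monotone tuple it gives
`u i ≤ u last ≤ u 0 ≤ u i`, so central tuples are the constant ones, on which all operations
act as in `B`; evaluation at the first coordinate is then inverse to `b ↦ (b, …, b)`. -/

theorem Tsup_Tstar_eq_Ttop_iff (u : TB n B) :
    Tsup u (Tstar u) = Ttop ↔ ∀ i, u.1 i.rev ≤ u.1 i := by
  simp only [Subtype.ext_iff, funext_iff, Tsup, Tstar, Ttop, ← codisjoint_iff,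
    codisjoint_iff_compl_le_left, compl_compl]

theorem Tsup_Tstar_eq_Ttop_iff_forall_eq_zero (u : TB (n + 1) B) :
    Tsup u (Tstar u) = Ttop ↔ ∀ i, u.1 i = u.1 0 := by
  rw [Tsup_Tstar_eq_Ttop_iff]
  refine ⟨fun h i => le_antisymm ?_ (u.2 (Fin.zero_le i)), fun h i => by rw [h, h i]⟩
  calc u.1 i ≤ u.1 (Fin.rev 0) := u.2 (by simpa using Fin.le_last i)
    _ ≤ u.1 0 := h 0

theorem Tsup_Tstar_eq_Ttop_iff_exists_const (u : TB (n + 1) B) :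
    Tsup u (Tstar u) = Ttop ↔ ∃ b, ∀ i, u.1 i = b := by
  rw [Tsup_Tstar_eq_Ttop_iff_forall_eq_zero]
  exact ⟨fun h => ⟨_, h⟩, fun ⟨b, hb⟩ i => (hb i).trans (hb 0).symm⟩

theorem Tsup_Tstar_Tsup_eq_Ttop {u v : TB n B} (hu : Tsup u (Tstar u) = Ttop)
    (hv : Tsup v (Tstar v) = Ttop) : Tsup (Tsup u v) (Tstar (Tsup u v)) = Ttop := by
  rw [Tsup_Tstar_eq_Ttop_iff] at *
  exact fun i => sup_le_sup (hu i) (hv i)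

theorem Tsup_Tstar_Tinf_eq_Ttop {u v : TB n B} (hu : Tsup u (Tstar u) = Ttop)
    (hv : Tsup v (Tstar v) = Ttop) : Tsup (Tinf u v) (Tstar (Tinf u v)) = Ttop := by
  rw [Tsup_Tstar_eq_Ttop_iff] at *
  exact fun i => inf_le_inf (hu i) (hv i)

theorem Tsup_Tstar_Tstar_eq_Ttop {u : TB n B} (hu : Tsup u (Tstar u) = Ttop) :
    Tsup (Tstar u) (Tstar (Tstar u)) = Ttop := by
  rw [Tsup_Tstar_eq_Ttop_iff] at *
  exact fun i => by simpa [Tstar] using compl_le_compl (hu i)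

def Tconst (b : B) : TB n B := ⟨fun _ => b, monotone_const⟩

theorem Tsup_Tstar_Tconst_eq_Ttop (b : B) : Tsup (Tconst b : TB n B) (Tstar (Tconst b)) = Ttop :=
  (Tsup_Tstar_eq_Ttop_iff _).2 fun _ => le_rfl

/-- For any Boolean algebra `B`, the Boolean center of `T(B)` (with tuples of positive
length `n+1`) consists exactly of the constant tuples, and the map
`ε_B : C(T(B)) → B`, sending a constant tuple `(u,…,u)` to `u` (i.e. evaluation at the
first coordinate), is a Boolean algebra isomorphism: it is bijective, and it preserves
sup, inf, complement, top and bottom (the center being closed under these operations). -/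
theorem TB_center_iso (n : ℕ) (B : Type*) [BooleanAlgebra B] :
    -- the center of T(B) is exactly the set of constant tuples
    (∀ u : TB (n + 1) B, Tsup u (Tstar u) = Ttop ↔ ∃ b : B, ∀ i, u.1 i = b) ∧
    -- the center is closed under the operations
    (∀ u v : TB (n + 1) B, Tsup u (Tstar u) = Ttop → Tsup v (Tstar v) = Ttop →
      Tsup (Tsup u v) (Tstar (Tsup u v)) = Ttop ∧
      Tsup (Tinf u v) (Tstar (Tinf u v)) = Ttop ∧
      Tsup (Tstar u) (Tstar (Tstar u)) = Ttop) ∧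
    (Tsup (Ttop : TB (n + 1) B) (Tstar Ttop) = Ttop) ∧
    (Tsup (Tbot : TB (n + 1) B) (Tstar Tbot) = Ttop) ∧
    -- ε is bijective
    Function.Bijective
      (fun u : {u : TB (n + 1) B // Tsup u (Tstar u) = Ttop} => u.1.1 0) ∧
    -- ε is a Boolean homomorphism
    (∀ u v : TB (n + 1) B, Tsup u (Tstar u) = Ttop → Tsup v (Tstar v) = Ttop →
      (Tsup u v).1 0 = u.1 0 ⊔ v.1 0 ∧
      (Tinf u v).1 0 = u.1 0 ⊓ v.1 0 ∧
      (Tstar u).1 0 = (u.1 0)ᶜ) ∧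
    ((Ttop : TB (n + 1) B).1 0 = ⊤) ∧
    ((Tbot : TB (n + 1) B).1 0 = ⊥) := by
  have const_of_center (u : TB (n + 1) B) := (Tsup_Tstar_eq_Ttop_iff_forall_eq_zero u).1
  refine ⟨Tsup_Tstar_eq_Ttop_iff_exists_const,
    fun u v hu hv => ⟨Tsup_Tstar_Tsup_eq_Ttop hu hv, Tsup_Tstar_Tinf_eq_Ttop hu hv,
      Tsup_Tstar_Tstar_eq_Ttop hu⟩,
    Tsup_Tstar_Tconst_eq_Ttop ⊤, Tsup_Tstar_Tconst_eq_Ttop ⊥, ?_,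
    fun u v hu _ => ⟨rfl, rfl, congrArg compl (const_of_center u hu _)⟩, rfl, rfl⟩
  refine Function.bijective_iff_has_inverse.2
    ⟨fun b => ⟨Tconst b, Tsup_Tstar_Tconst_eq_Ttop b⟩, fun ⟨u, hu⟩ => ?_, fun _ => rfl⟩
  exact Subtype.ext <| Subtype.ext <| funext fun i => (const_of_center u hu i).symm
end

section
/- In any LM_{n+1}-algebra, with J's defined from the φ's by J_n(x) = φ_1(x) and J_i(x) = φ_{n-i+1}(x) ∧ (φ_{n-i}(x))* for i ∈ [n-1], one recovers φ_i(x) = ⋁_{k=n-i+1}^{n} J_k(x) for every i ∈ [n] and every x. -/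
/-!
Since `φ_{n-i} ≤ φ_{n-i+1}` and `φ_{n-i}(x)` is complemented by `(φ_{n-i}(x))*`, distributivity gives
`J_i(x) ⊔ φ_{n-i}(x) = φ_{n-i+1}(x)`; the tail suprema of the `J_k(x)` therefore telescope,
starting from `J_n(x) = φ_1(x)`.
-/

/-- The operations `J_1, …, J_n` of an `LM_{n+1}`-algebra, defined from the Chrysippian
endomorphisms by `J_n(x) = φ_1(x)` and `J_i(x) = φ_{n-i+1}(x) ⊓ (φ_{n-i}(x))*` for
`i ∈ [n-1]`.  Indices are `0`-based: the paper's `J_{i+1}` is `Jop n φ s i`, so that the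
paper's `φ_{n-i+1}` is `φ i.rev`, and the extra meetand is absent exactly when `i` is the
last index. -/
def Jop {L : Type*} [Lattice L] [OrderTop L] (n : ℕ) (φ : Fin n → L → L) (s : L → L)
    (i : Fin n) (x : L) : L :=
  φ i.rev x ⊓
    if h : i.val + 1 < n then s (φ ⟨n - 2 - i.val, by omega⟩ x) else ⊤

theorem inf_sup_eq_left_of_le_of_sup_eq_top {α : Type*} [DistribLattice α] [OrderTop α]
    {a b c : α} (hba : b ≤ a) (hbc : b ⊔ c = ⊤) : a ⊓ c ⊔ b = a := by
  rw [sup_inf_right, sup_eq_left.2 hba, sup_comm, hbc, inf_top_eq]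

namespace Fin

theorem Ici_castSucc_eq_cons {m : ℕ} (i : Fin m) :
    Finset.Ici i.castSucc = (Finset.Ici i.succ).cons i.castSucc (by simp) := by
  rw [Finset.Ici_eq_cons_Ioi]
  congr 1
  ext k
  simp [castSucc_lt_iff_succ_le]

theorem sup_Ici_eq_of_sup_succ {α : Type*} [SemilatticeSup α] [OrderBot α] {m : ℕ}
    (f g : Fin (m + 1) → α) (hlast : f (last m) = g (last m))
    (hstep : ∀ i : Fin m, f i.castSucc ⊔ g i.succ = g i.castSucc) (a : Fin (m + 1)) :
    (Finset.Ici a).sup f = g a := by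
  induction a using Fin.reverseInduction with
  | last => rw [← top_eq_last, Finset.Ici_top, Finset.sup_singleton, top_eq_last, hlast]
  | cast i ih => rw [Ici_castSucc_eq_cons, Finset.sup_cons, ih, hstep]

end Fin

section Jop

variable {L : Type*} [Lattice L] [OrderTop L] {m : ℕ} (φ : Fin (m + 1) → L → L) (s : L → L)

theorem Jop_last (x : L) : Jop (m + 1) φ s (Fin.last m) x = φ 0 x := by
  simp [Jop]

theorem Jop_castSucc (i : Fin m) (x : L) :
    Jop (m + 1) φ s i.castSucc x = φ i.castSucc.rev x ⊓ s (φ i.succ.rev x) := by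
  rw [Jop, dif_pos (by simp)]
  congr 3
  ext
  simp only [Nat.reduceSubDiff, Fin.val_castSucc, Fin.val_rev, Fin.val_succ]
  omega

end Jop

theorem lm_phi_eq_sup_J_general (n : ℕ) (L : Type*) [DistribLattice L] [BoundedOrder L]
    (s : L → L)
    (φ : Fin n → L → L)
    (hL2 : ∀ (i : Fin n) (x : L), φ i x ⊔ s (φ i x) = ⊤)
    (hL5 : ∀ (i j : Fin n) (x : L), i ≤ j → φ i x ≤ φ j x) :
    ∀ (i : Fin n) (x : L), φ i x = (Finset.Ici i.rev).sup fun k => Jop n φ s k x := by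
  intro i x
  cases n with
  | zero => exact i.elim0
  | succ m =>
    rw [Fin.sup_Ici_eq_of_sup_succ _ (fun k => φ k.rev x), Fin.rev_rev]
    · rw [Jop_last, Fin.rev_last]
    · intro k
      rw [Jop_castSucc]
      exact inf_sup_eq_left_of_le_of_sup_eq_top
        (hL5 _ _ x (Fin.rev_le_rev.2 k.castSucc_lt_succ.le)) (hL2 _ x)

theorem lm_phi_eq_sup_J (n : ℕ) (L : Type*) [DistribLattice L] [BoundedOrder L]
    (s : L → L)
    (h_inv : ∀ x : L, s (s x) = x)
    (h_dm : ∀ x y : L, s (x ⊔ y) = s x ⊓ s y)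
    (φ : Fin n → L → L)
    (hL1 : ∀ (i : Fin n) (x y : L), φ i (x ⊔ y) = φ i x ⊔ φ i y)
    (hL2 : ∀ (i : Fin n) (x : L), φ i x ⊔ s (φ i x) = ⊤)
    (hL3 : ∀ (i j : Fin n) (x : L), φ i (φ j x) = φ j x)
    (hL4 : ∀ (i : Fin n) (x : L), φ i (s x) = s (φ i.rev x))
    (hL5 : ∀ (i j : Fin n) (x : L), i ≤ j → φ i x ≤ φ j x)
    (hL6 : ∀ x y : L, (∀ i : Fin n, φ i x = φ i y) → x = y) :
    ∀ (i : Fin n) (x : L), φ i x = (Finset.Ici i.rev).sup fun k => Jop n φ s k x :=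
  lm_phi_eq_sup_J_general n L s φ hL2 hL5
end
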